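/- arXiv:1611.00562 — 5 statements merged into one kernel-verified Lean document; each statement's English description precedes it below -/
import Mathlib

section
/- For any set S, the collection Ω(S) of all downward-closed families of finite subsets of S, ordered by reverse inclusion and with addition given by intersection, is a value quantale; moreover an element p ∈ Ω(S) is well above the bottom element (p ≻ ⊥) if and only if p is a finite family. -/
/-- `y` is well above `x` (written `y ≻ x`): for every `S` with `⨅ S ≤ x`
there is `s ∈ S` with `s ≤ y`. -/
def WellAbove {V : Type*} [CompleteLattice V] (y x : V) : Prop :=
  ∀ S : Set V, sInf S ≤ x → ∃ s ∈ S, s ≤ y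

theorem WellAbove.mono {V : Type*} [CompleteLattice V] {a b x : V}
    (h : WellAbove a x) (hab : a ≤ b) : WellAbove b x := by
  intro S hS
  obtain ⟨s, hs, hsa⟩ := h S hS
  exact ⟨s, hs, hsa.trans hab⟩

/-- A complete lattice `V` together with an addition `add` is a value quantale if it is
completely distributive (expressed via Raney's characterization `y = ⨅ {a | a ≻ y}`),
the set `{a | a ≻ ⊥}` is a filter (nonempty, upward closed, closed under binary meets),
and `add` is associative, commutative, has `⊥` as neutral element and distributes over
arbitrary infima. -/
structure IsValueQuantale (V : Type*) [CompleteLattice V] (add : V → V → V) : Prop where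
  raney : ∀ y : V, y = sInf {a | WellAbove a y}
  wellAbove_bot_nonempty : ∃ a : V, WellAbove a ⊥
  wellAbove_bot_upward : ∀ a b : V, WellAbove a ⊥ → a ≤ b → WellAbove b ⊥
  wellAbove_bot_inf : ∀ a b : V, WellAbove a ⊥ → WellAbove b ⊥ → WellAbove (a ⊓ b) ⊥
  add_assoc : ∀ a b c : V, add (add a b) c = add a (add b c)
  add_comm : ∀ a b : V, add a b = add b a
  add_bot : ∀ a : V, add a ⊥ = a
  add_sInf : ∀ (a : V) (S : Set V), add a (sInf S) = ⨅ s ∈ S, add a s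

/-- A value quantale, bundled as a class. -/
class ValueQuantale (V : Type*) extends CompleteLattice V, Add V where
  isVQ : IsValueQuantale V (· + ·)

/-- `d : X → X → V` is a `V`-space distance (w.r.t. the addition `add`). -/
structure IsVSpaceOn {V : Type*} [CompleteLattice V] (add : V → V → V)
    {X : Type*} (d : X → X → V) : Prop where
  refl : ∀ x, d x x = ⊥
  triangle : ∀ x y z, d x z ≤ add (d x y) (d y z)

/-- The open ball of radius `ε` about `x`: all `y` with `d x y ≺ ε`. -/
def ball {V X : Type*} [CompleteLattice V] (d : X → X → V) (ε : V) (x : X) : Set X :=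
  {y | WellAbove ε (d x y)}

/-- `U` is open for the topology generated by a continuity space. -/
def GenOpen {V X : Type*} [CompleteLattice V] (d : X → X → V) (U : Set X) : Prop :=
  ∀ x ∈ U, ∃ ε : V, WellAbove ε ⊥ ∧ ball d ε x ⊆ U

/-- The topology generated by a continuity space `(V, X, d)`. -/
def genTop {V X : Type*} [ValueQuantale V] (d : X → X → V) : TopologicalSpace X where
  IsOpen := GenOpen d
  isOpen_univ := fun _x _ => by
    obtain ⟨ε, hε⟩ := (ValueQuantale.isVQ (V := V)).wellAbove_bot_nonempty
    exact ⟨ε, hε, Set.subset_univ _⟩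
  isOpen_inter := fun U₁ U₂ h₁ h₂ x hx => by
    obtain ⟨ε₁, hε₁, hb₁⟩ := h₁ x hx.1
    obtain ⟨ε₂, hε₂, hb₂⟩ := h₂ x hx.2
    exact ⟨ε₁ ⊓ ε₂, (ValueQuantale.isVQ (V := V)).wellAbove_bot_inf _ _ hε₁ hε₂,
      fun y hy => ⟨hb₁ (WellAbove.mono hy inf_le_left), hb₂ (WellAbove.mono hy inf_le_right)⟩⟩
  isOpen_sUnion := fun S hS x hx => by
    obtain ⟨U, hU, hxU⟩ := hx
    obtain ⟨ε, hε, hb⟩ := hS U hU x hxU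
    exact ⟨ε, hε, hb.trans (Set.subset_sUnion_of_mem hU)⟩

/-- `Ω S`: the downward-closed families of finite subsets of `S`,
ordered by reverse inclusion. -/
abbrev Omega (S : Type*) := (LowerSet (Finset S))ᵒᵈ

/-- The underlying family of finite subsets of an element of `Ω S`. -/
def Omega.carrier {S : Type*} (A : Omega S) : Set (Finset S) :=
  ((OrderDual.ofDual A : LowerSet (Finset S)) : Set (Finset S))

/-- Construct an element of `Ω S` from a downward-closed family of finite subsets. -/
def Omega.mk {S : Type*} (A : Set (Finset S)) (h : IsLowerSet A) : Omega S :=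
  OrderDual.toDual ⟨A, h⟩

/-- Addition on `Ω S`: intersection of the families. -/
def omegaAdd {S : Type*} (A B : Omega S) : Omega S :=
  Omega.mk (Omega.carrier A ∩ Omega.carrier B)
    ((OrderDual.ofDual A : LowerSet (Finset S)).lower.inter
      (OrderDual.ofDual B : LowerSet (Finset S)).lower)

/-!
`Ω S` is the order dual of the lattice of lower sets of `Finset S`, which is completely
distributive, and intersection is its join; so the quantale laws are lattice laws. The
principal element `↓F` is well above every `y` containing `F`, which gives Raney's identity
`y = ⨅ {a | a ≻ y}`. As `⨅_F ↓F = ⊥`, `p ≻ ⊥` holds iff `p ≥ ↓F` for some `F`, i.e. iff the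
family `p` is bounded above, i.e. finite.
-/

theorem WellAbove.ge {V : Type*} [CompleteLattice V] {a y : V} (h : WellAbove a y) : y ≤ a := by
  obtain ⟨s, rfl, hs⟩ := h {y} sInf_singleton.le
  exact hs

namespace Omega

variable {S : Type*}

theorem le_iff_carrier_subset {A B : Omega S} : A ≤ B ↔ carrier B ⊆ carrier A := Iff.rfl

theorem isLowerSet_carrier (A : Omega S) : IsLowerSet (carrier A) :=
  (OrderDual.ofDual A).lower

theorem mem_carrier_sInf {T : Set (Omega S)} {F : Finset S} :
    F ∈ carrier (sInf T) ↔ ∃ A ∈ T, F ∈ carrier A := by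
  simp [carrier]

theorem carrier_inf (A B : Omega S) : carrier (A ⊓ B) = carrier A ∪ carrier B := rfl

theorem omegaAdd_eq_sup : (omegaAdd : Omega S → Omega S → Omega S) = (· ⊔ ·) := rfl

def principal (F : Finset S) : Omega S :=
  OrderDual.toDual (LowerSet.Iic F)

theorem mem_carrier_principal_self (F : Finset S) : F ∈ carrier (principal F) :=
  Set.mem_Iic.2 le_rfl

theorem le_principal_iff {A : Omega S} {F : Finset S} : A ≤ principal F ↔ F ∈ carrier A :=
  ⟨fun h => h (mem_carrier_principal_self F), fun h _ hG => isLowerSet_carrier A hG h⟩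

theorem principal_le_iff {A : Omega S} {F : Finset S} :
    principal F ≤ A ↔ F ∈ upperBounds (carrier A) := Iff.rfl

theorem iInf_principal : ⨅ F : Finset S, principal F = ⊥ :=
  le_bot_iff.1 fun F _ => mem_carrier_sInf.2 ⟨_, ⟨F, rfl⟩, mem_carrier_principal_self F⟩

theorem wellAbove_principal {y : Omega S} {F : Finset S} (hF : F ∈ carrier y) :
    WellAbove (principal F) y := fun _ hT =>
  let ⟨A, hA, hFA⟩ := mem_carrier_sInf.1 (hT hF)
  ⟨A, hA, le_principal_iff.2 hFA⟩

theorem eq_sInf_wellAbove (y : Omega S) : y = sInf {a | WellAbove a y} :=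
  le_antisymm (le_sInf fun _ ha => ha.ge) fun F hF =>
    mem_carrier_sInf.2 ⟨_, wellAbove_principal hF, mem_carrier_principal_self F⟩

theorem wellAbove_bot_iff_bddAbove {p : Omega S} : WellAbove p ⊥ ↔ BddAbove (carrier p) := by
  constructor
  · intro h
    obtain ⟨_, ⟨F, rfl⟩, hF⟩ := h _ iInf_principal.le
    exact ⟨F, principal_le_iff.1 hF⟩
  · rintro ⟨F, hF⟩
    exact (wellAbove_principal (y := ⊥) (Set.mem_univ F)).mono (principal_le_iff.2 hF)

theorem wellAbove_bot_iff_finite {p : Omega S} : WellAbove p ⊥ ↔ (carrier p).Finite := by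
  classical
  exact wellAbove_bot_iff_bddAbove.trans Set.finite_iff_bddAbove.symm

theorem isValueQuantale : IsValueQuantale (Omega S) omegaAdd := by
  rw [omegaAdd_eq_sup]
  exact
    { raney := eq_sInf_wellAbove
      wellAbove_bot_nonempty := ⟨⊤, wellAbove_bot_iff_bddAbove.2 bddAbove_empty⟩
      wellAbove_bot_upward := fun _ _ ha hab => ha.mono hab
      wellAbove_bot_inf := fun a b ha hb => by
        rw [wellAbove_bot_iff_bddAbove, carrier_inf]
        exact (wellAbove_bot_iff_bddAbove.1 ha).union (wellAbove_bot_iff_bddAbove.1 hb)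
      add_assoc := sup_assoc
      add_comm := sup_comm
      add_bot := sup_bot_eq
      add_sInf := fun _ _ => sup_sInf_eq }

end Omega

/-- For any set `S`, the collection `Ω S` of downward-closed families of
finite subsets of `S`, ordered by reverse inclusion with addition given by intersection,
is a value quantale, and `p ≻ ⊥` iff `p` is a finite family. -/
theorem omega_isValueQuantale (S : Type*) :
    (∀ A B : Omega S, A ≤ B ↔ Omega.carrier B ⊆ Omega.carrier A) ∧
    (∀ A B : Omega S, Omega.carrier (omegaAdd A B) = Omega.carrier A ∩ Omega.carrier B) ∧
    IsValueQuantale (Omega S) omegaAdd ∧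
    (∀ p : Omega S, WellAbove p ⊥ ↔ (Omega.carrier p).Finite) :=
  ⟨fun _ _ => Omega.le_iff_carrier_subset, fun _ _ => rfl, Omega.isValueQuantale,
    fun _ => Omega.wellAbove_bot_iff_finite⟩
end

section
/- Let (V,X,d) and (W,Y,m) be continuity spaces and f : X → Y a function. Then f is ε–δ continuous (for every x ∈ X and every ε ∈ W_≺ there exists δ ∈ V_≺ such that for all x' ∈ X, d(x,x') ≺ δ implies m(f(x),f(x')) ≺ ε) if and only if f is continuous with respect to the topologies generated by (V,X,d) and (W,Y,m). -/
/-!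
Open balls form a neighbourhood base of the generated topology, so ε–δ continuity is just
continuity at every point. The only real work is that balls are open: if `d x y ≺ ε`, complete
distributivity lets us interpolate `d x y ≺ q ≺ ε`, and since `d x y + ⨅ {δ | δ ≻ ⊥} = d x y ≺ q`
some `δ ≻ ⊥` has `d x y + δ ≤ q`; by the triangle inequality `B_δ(y) ⊆ B_ε(x)`.
-/

theorem WellAbove.le {V : Type*} [CompleteLattice V] {a x : V} (h : WellAbove a x) : x ≤ a := by
  obtain ⟨s, rfl, hs⟩ := h {x} (by simp)
  exact hs

theorem WellAbove.mono_right {V : Type*} [CompleteLattice V] {a x y : V}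
    (h : WellAbove a x) (hyx : y ≤ x) : WellAbove a y :=
  fun S hS => h S (hS.trans hyx)

theorem WellAbove.exists_interpolate {V : Type*} [CompleteLattice V]
    (raney : ∀ y : V, y = sInf {a | WellAbove a y}) {r p : V} (h : WellAbove r p) :
    ∃ q, WellAbove r q ∧ WellAbove q p := by
  have hT : sInf {b : V | ∃ a, WellAbove a p ∧ WellAbove b a} ≤ p := by
    refine le_trans (le_sInf fun a ha => ?_) (raney p).ge
    calc sInf {b : V | ∃ a', WellAbove a' p ∧ WellAbove b a'}
        ≤ sInf {b | WellAbove b a} := sInf_le_sInf fun b hb => ⟨a, ha, hb⟩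
      _ = a := (raney a).symm
  obtain ⟨b, ⟨a, hap, hba⟩, hbr⟩ := h _ hT
  exact ⟨a, hba.mono hbr, hap⟩

section ValueQuantale

variable {V : Type*} [ValueQuantale V]

theorem ValueQuantale.add_le_add_left {b c : V} (h : b ≤ c) (a : V) : a + b ≤ a + c := by
  have hpair := (ValueQuantale.isVQ (V := V)).add_sInf a {b, c}
  rw [sInf_pair, inf_eq_left.mpr h] at hpair
  rw [hpair]
  exact biInf_le _ (by simp)

theorem WellAbove.exists_add_le {ε p : V} (h : WellAbove ε p) :
    ∃ δ : V, WellAbove δ ⊥ ∧ p + δ ≤ ε := by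
  have hq := ValueQuantale.isVQ (V := V)
  have hS : sInf ((p + ·) '' {δ : V | WellAbove δ ⊥}) ≤ p := by
    rw [sInf_image, ← hq.add_sInf, ← hq.raney ⊥, hq.add_bot]
  obtain ⟨s, ⟨δ, hδ, rfl⟩, hs⟩ := h _ hS
  exact ⟨δ, hδ, hs⟩

theorem WellAbove.exists_wellAbove_add {ε p : V} (h : WellAbove ε p) :
    ∃ δ : V, WellAbove δ ⊥ ∧ WellAbove ε (p + δ) := by
  obtain ⟨q, hεq, hqp⟩ := h.exists_interpolate (ValueQuantale.isVQ (V := V)).raney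
  obtain ⟨δ, hδ, hle⟩ := hqp.exists_add_le
  exact ⟨δ, hδ, hεq.mono_right hle⟩

theorem mem_ball_self {X : Type*} {d : X → X → V} (hd : IsVSpaceOn (· + · : V → V → V) d)
    {ε : V} (hε : WellAbove ε ⊥) (x : X) : x ∈ ball d ε x := by
  change WellAbove ε (d x x)
  rwa [hd.refl x]

theorem genOpen_ball {X : Type*} {d : X → X → V} (hd : IsVSpaceOn (· + · : V → V → V) d)
    (ε : V) (x : X) : GenOpen d (ball d ε x) := by
  intro y (hy : WellAbove ε (d x y))
  obtain ⟨δ, hδ, hεδ⟩ := hy.exists_wellAbove_add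
  refine ⟨δ, hδ, fun z (hz : WellAbove δ (d y z)) => ?_⟩
  exact hεδ.mono_right <| (hd.triangle x y z).trans (ValueQuantale.add_le_add_left hz.le _)

end ValueQuantale

theorem epsilonDelta_iff_continuous_general {V W X Y : Type*} [ValueQuantale V] [ValueQuantale W]
    (d : X → X → V)
    (m : Y → Y → W) (hm : IsVSpaceOn (· + · : W → W → W) m)
    (f : X → Y) :
    (∀ x : X, ∀ ε : W, WellAbove ε ⊥ →
        ∃ δ : V, WellAbove δ ⊥ ∧
          ∀ x' : X, WellAbove δ (d x x') → WellAbove ε (m (f x) (f x'))) ↔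
      @Continuous X Y (genTop d) (genTop m) f := by
  rw [@continuous_def X Y (genTop d) (genTop m)]
  constructor
  · intro h U hU x hx
    obtain ⟨ε, hε, hball⟩ := hU (f x) hx
    obtain ⟨δ, hδ, hδε⟩ := h x ε hε
    exact ⟨δ, hδ, fun x' hx' => hball (hδε x' hx')⟩
  · intro h x ε hε
    obtain ⟨δ, hδ, hball⟩ := h _ (genOpen_ball hm ε (f x)) x (mem_ball_self hm hε (f x))
    exact ⟨δ, hδ, fun x' hx' => hball hx'⟩

/-- for continuity spaces `(V,X,d)` and `(W,Y,m)`, a function `f : X → Y`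
is ε–δ continuous iff it is topologically continuous for the generated topologies. -/
theorem epsilonDelta_iff_continuous {V W X Y : Type*} [ValueQuantale V] [ValueQuantale W]
    (d : X → X → V) (hd : IsVSpaceOn (· + · : V → V → V) d)
    (m : Y → Y → W) (hm : IsVSpaceOn (· + · : W → W → W) m)
    (f : X → Y) :
    (∀ x : X, ∀ ε : W, WellAbove ε ⊥ →
        ∃ δ : V, WellAbove δ ⊥ ∧
          ∀ x' : X, WellAbove δ (d x x') → WellAbove ε (m (f x) (f x'))) ↔
      @Continuous X Y (genTop d) (genTop m) f :=
  epsilonDelta_iff_continuous_general d m hm f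
end

section
/- Let (V,X,d) be a continuity space and C ⊆ X. Then the closure of C in the topology generated by (V,X,d) equals {z ∈ X | d(z,C) = ⊥}; in particular, C is closed in this topology if and only if for every x ∈ X, d(x,C) = ⊥ implies x ∈ C. -/
/-!
Raney's characterisation `y = ⨅ {a | a ≻ y}` lets one read order facts off the relation `≻`.
If `d(z,C) = ⊥`, then every `ε ≻ ⊥` is well above some `d(z,y)` with `y ∈ C`, so every
ball about `z` meets `C`. Conversely, if `d(z,C) ≠ ⊥`, some `ε ≻ ⊥` is not well above
`d(z,C)`; by the triangle inequality `d(z,C) ≤ d(z,w) + d(w,C)`, no `w` with `d(w,C) = ⊥`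
lies in `B_ε(z)`. So `{z | d(z,C) = ⊥}` is a closed set squeezed between `C` and its closure.
-/

open Topology

theorem WellAbove.anti {V : Type*} [CompleteLattice V] {a x y : V}
    (h : WellAbove a y) (hxy : x ≤ y) : WellAbove a x :=
  fun S hS => h S (hS.trans hxy)

section Raney

variable {V : Type*} [CompleteLattice V] (hV : ∀ y : V, y = sInf {a | WellAbove a y})
include hV

theorem le_of_forall_wellAbove {x y : V} (h : ∀ a, WellAbove a y → WellAbove a x) : x ≤ y :=
  calc x = sInf {a | WellAbove a x} := hV x
    _ ≤ sInf {a | WellAbove a y} := sInf_le_sInf h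
    _ = y := (hV y).symm

theorem WellAbove.exists_of_iInf_le {ι : Type*} {f : ι → V} {x ε : V}
    (hε : WellAbove ε x) (hf : ⨅ i, f i ≤ x) : ∃ i, WellAbove ε (f i) := by
  set S := ⋃ i, {a | WellAbove a (f i)}
  have hS : sInf S ≤ x := by
    refine le_trans (le_iInf fun i => ?_) hf
    calc sInf S ≤ sInf {a | WellAbove a (f i)} :=
          sInf_le_sInf (Set.subset_iUnion (fun i => {a | WellAbove a (f i)}) i)
      _ = f i := (hV (f i)).symm
  obtain ⟨a, haS, haε⟩ := hε S hS
  obtain ⟨i, hai⟩ := Set.mem_iUnion.mp haS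
  exact ⟨i, hai.mono haε⟩

end Raney

def infDist {V X : Type*} [CompleteLattice V] (d : X → X → V) (x : X) (C : Set X) : V :=
  ⨅ y ∈ C, d x y

namespace IsVSpaceOn

theorem infDist_eq_bot_of_mem {V X : Type*} [CompleteLattice V] {add : V → V → V}
    {d : X → X → V} (hd : IsVSpaceOn add d) {C : Set X} {x : X} (hx : x ∈ C) :
    infDist d x C = ⊥ :=
  le_bot_iff.mp ((biInf_le (d x) hx).trans_eq (hd.refl x))

variable {V X : Type*} [ValueQuantale V] {d : X → X → V}
  (hd : IsVSpaceOn (· + · : V → V → V) d)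
include hd

theorem infDist_le_add_infDist (C : Set X) (z w : X) :
    infDist d z C ≤ d z w + infDist d w C := by
  have hdistrib : d z w + infDist d w C = ⨅ y ∈ C, (d z w + d w y) := by
    simpa only [infDist, sInf_image, iInf_image] using
      ValueQuantale.isVQ.add_sInf (d z w) (d w '' C)
  rw [hdistrib]
  exact le_iInf₂ fun y hy => (biInf_le (d z) hy).trans (hd.triangle z w y)

theorem isClosed_setOf_infDist_eq_bot (C : Set X) :
    IsClosed[genTop d] {z | infDist d z C = ⊥} := by
  let _ := genTop d
  rw [← isOpen_compl_iff]
  intro z hz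
  obtain ⟨ε, hε, hεz⟩ :
      ∃ ε : V, WellAbove ε ⊥ ∧ ¬ WellAbove ε (infDist d z C) := by
    by_contra! h
    exact hz <| le_bot_iff.mp <| le_of_forall_wellAbove ValueQuantale.isVQ.raney h
  refine ⟨ε, hε, fun w hw (hwC : infDist d w C = ⊥) => hεz (hw.anti ?_)⟩
  simpa only [hwC, ValueQuantale.isVQ.add_bot]
    using hd.infDist_le_add_infDist C z w

end IsVSpaceOn

theorem setOf_infDist_eq_bot_subset_closure {V X : Type*} [ValueQuantale V] (d : X → X → V)
    (C : Set X) : {z | infDist d z C = ⊥} ⊆ closure[genTop d] C := by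
  let _ := genTop d
  intro z hz
  rw [mem_closure_iff]
  intro U hU hzU
  obtain ⟨ε, hε, hball⟩ := hU z hzU
  have hinf : ⨅ y : C, d z y ≤ ⊥ := (iInf_subtype'' C (d z)).trans_le hz.le
  obtain ⟨⟨y, hyC⟩, hy⟩ := hε.exists_of_iInf_le ValueQuantale.isVQ.raney hinf
  exact ⟨y, hball hy, hyC⟩

/-- for a continuity space `(V,X,d)` and `C ⊆ X`, the closure of `C` in the
generated topology is `{z | d(z,C) = ⊥}`; in particular `C` is closed iff
`d(x,C) = ⊥ → x ∈ C` for every `x`. -/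
theorem closure_eq_zero_dist {V X : Type*} [ValueQuantale V] (d : X → X → V)
    (hd : IsVSpaceOn (· + · : V → V → V) d) (C : Set X) :
    @closure X (genTop d) C = {z : X | (⨅ y ∈ C, d z y) = ⊥} ∧
    (@IsClosed X (genTop d) C ↔ ∀ x : X, (⨅ y ∈ C, d x y) = ⊥ → x ∈ C) := by
  let _ := genTop d
  have hclosure : closure C = {z | infDist d z C = ⊥} :=
    (closure_minimal (fun _ => hd.infDist_eq_bot_of_mem)
      (hd.isClosed_setOf_infDist_eq_bot C)).antisymm (setOf_infDist_eq_bot_subset_closure d C)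
  refine ⟨hclosure, ?_⟩
  rw [← closure_subset_iff_isClosed, hclosure]
  rfl
end

section
/- Let V be a value quantale. If ε ≻ ⊥ then there exists δ ≻ ⊥ such that ε ≻ δ + δ. -/
/-! Complete distributivity lets `≻` interpolate, giving `ε ≻ θ ≻ ⊥`. As `+` distributes over
infima in each argument, `⊥ = ⊥ + ⊥ = ⨅ {a + b | a ≻ ⊥, b ≻ ⊥}`, so `θ ≻ ⊥` yields `a, b ≻ ⊥`
with `a + b ≤ θ`, and `δ = a ⊓ b` works because `+` is monotone. -/

theorem WellAbove.of_le_right {V : Type*} [CompleteLattice V] {y x x' : V}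
    (h : WellAbove y x) (hx : x' ≤ x) : WellAbove y x' :=
  fun S hS => h S (hS.trans hx)

theorem WellAbove.exists_between {V : Type*} [CompleteLattice V]
    (raney : ∀ y : V, y = sInf {a | WellAbove a y}) {ε x : V} (h : WellAbove ε x) :
    ∃ θ, WellAbove ε θ ∧ WellAbove θ x := by
  have hS : sInf {b | ∃ a, WellAbove a x ∧ WellAbove b a} ≤ x := by
    conv_rhs => rw [raney x]
    refine le_sInf fun a ha => ?_
    rw [raney a]
    exact sInf_le_sInf fun b hb => ⟨a, ha, hb⟩
  obtain ⟨b, ⟨θ, hθ, hbθ⟩, hbε⟩ := h _ hS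
  exact ⟨θ, hbθ.mono hbε, hθ⟩

namespace ValueQuantale

variable {V : Type*} [ValueQuantale V]

theorem add_sInf (a : V) (S : Set V) : a + sInf S = ⨅ s ∈ S, a + s :=
  isVQ.add_sInf a S

theorem add_le_add_left_s12 {a b : V} (hab : a ≤ b) (c : V) : c + a ≤ c + b :=
  calc c + a = c + sInf {a, b} := by rw [sInf_pair, inf_eq_left.mpr hab]
    _ = ⨅ s ∈ ({a, b} : Set V), c + s := add_sInf c _
    _ ≤ c + b := biInf_le _ (Set.mem_insert_of_mem a rfl)

theorem add_le_add {a b c d : V} (hab : a ≤ b) (hcd : c ≤ d) : a + c ≤ b + d :=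
  calc a + c ≤ a + d := add_le_add_left_s12 hcd a
    _ = d + a := isVQ.add_comm a d
    _ ≤ d + b := add_le_add_left_s12 hab d
    _ = b + d := isVQ.add_comm d b

theorem sInf_add_sInf (S T : Set V) : sInf S + sInf T = ⨅ s ∈ S, ⨅ t ∈ T, s + t := by
  rw [isVQ.add_comm, add_sInf]
  refine iInf_congr fun s => iInf_congr fun _ => ?_
  rw [isVQ.add_comm, add_sInf]

theorem exists_add_le_of_wellAbove_bot {θ : V} (hθ : WellAbove θ ⊥) :
    ∃ a b : V, WellAbove a ⊥ ∧ WellAbove b ⊥ ∧ a + b ≤ θ := by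
  set A : Set V := {a | WellAbove a ⊥}
  have hbot : sInf (Set.image2 (· + ·) A A) ≤ ⊥ := by
    rw [sInf_image2, ← sInf_add_sInf, ← isVQ.raney ⊥, isVQ.add_bot]
  obtain ⟨_, ⟨a, ha, b, hb, rfl⟩, hab⟩ := hθ _ hbot
  exact ⟨a, b, ha, hb, hab⟩

end ValueQuantale

/-- in a value quantale, if `ε ≻ ⊥` then there is `δ ≻ ⊥` with
`ε ≻ δ + δ`. -/
theorem exists_half {V : Type*} [ValueQuantale V] (ε : V) (h : WellAbove ε ⊥) :
    ∃ δ : V, WellAbove δ ⊥ ∧ WellAbove ε (δ + δ) := by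
  obtain ⟨θ, hεθ, hθ⟩ := h.exists_between ValueQuantale.isVQ.raney
  obtain ⟨a, b, ha, hb, habθ⟩ := ValueQuantale.exists_add_le_of_wellAbove_bot hθ
  refine ⟨a ⊓ b, ValueQuantale.isVQ.wellAbove_bot_inf a b ha hb, hεθ.of_le_right ?_⟩
  exact (ValueQuantale.add_le_add inf_le_left inf_le_right).trans habθ
end

section
/- Let (V,X,d) be a continuity space with X nonempty. The topology generated by (V,X,d) is connected if and only if for all a, b ∈ X and every function R : X → V_≺ there exists a walk a = x_1, …, x_n = b in X such that for each 1 ≤ j < n, either d(x_j, x_{j+1}) ≺ R(x_j) or d(x_{j+1}, x_j) ≺ R(x_{j+1}). -/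
/-!
Fix radii `R : X → V_≺` and call `p, q` adjacent when one lies in the `R`-ball of the other.
A set is clopen exactly when, for some such `R`, it is closed under adjacency: given a clopen
set, pick at each point a ball inside the side of the partition containing that point.
Hence connectedness says that every adjacency-invariant set is trivial, and the points joined
to `a` by walks form such a set containing `a`.
-/

theorem List.exists_isChain_head?_getLast?_iff_reflTransGen {α : Type*} {r : α → α → Prop}
    {a b : α} :
    (∃ l : List α, l.head? = some a ∧ l.getLast? = some b ∧ l.IsChain r) ↔
      Relation.ReflTransGen r a b := by
  constructor
  · rintro ⟨l, ha, hb, hl⟩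
    have hne : l ≠ [] := by rintro rfl; simp at ha
    rw [head?_eq_some_head hne, Option.some_inj] at ha
    rw [getLast?_eq_some_getLast hne, Option.some_inj] at hb
    exact ha ▸ hb ▸ relationReflTransGen_of_exists_isChain l hl hne
  · intro h
    obtain ⟨l, hne, hl, ha, hb⟩ := exists_isChain_ne_nil_of_relationReflTransGen h
    exact ⟨l, ha ▸ head?_eq_some_head hne, hb ▸ getLast?_eq_some_getLast hne, hl⟩

theorem Relation.ReflTransGen.mem_of_mem {α : Type*} {r : α → α → Prop} {U : Set α} {a b : α}
    (hU : ∀ p q, r p q → p ∈ U → q ∈ U) (h : ReflTransGen r a b) (ha : a ∈ U) : b ∈ U := by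
  induction h with
  | refl => exact ha
  | tail _ hbc ih => exact hU _ _ hbc ih

section ContinuitySpace

variable {V X : Type*}

def BallAdj [CompleteLattice V] (d : X → X → V) (R : X → V) (p q : X) : Prop :=
  WellAbove (R p) (d p q) ∨ WellAbove (R q) (d q p)

theorem ballAdj_comm [CompleteLattice V] {d : X → X → V} {R : X → V} {p q : X} :
    BallAdj d R p q ↔ BallAdj d R q p :=
  or_comm

theorem isClopen_genTop_iff [ValueQuantale V] {d : X → X → V} {U : Set X} :
    @IsClopen X (genTop d) U ↔
      ∃ R : X → V, (∀ x, WellAbove (R x) ⊥) ∧ ∀ p q, BallAdj d R p q → (p ∈ U ↔ q ∈ U) := by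
  let := genTop d
  rw [IsClopen, ← isOpen_compl_iff]
  constructor
  · rintro ⟨hUc, hU⟩
    have hR : ∀ x, ∃ ε, WellAbove ε ⊥ ∧ ∀ y ∈ ball d ε x, (x ∈ U ↔ y ∈ U) := by
      intro x
      by_cases hx : x ∈ U
      · obtain ⟨ε, hε, hball⟩ := hU x hx
        exact ⟨ε, hε, fun y hy => iff_of_true hx (hball hy)⟩
      · obtain ⟨ε, hε, hball⟩ := hUc x hx
        exact ⟨ε, hε, fun y hy => iff_of_false hx (hball hy)⟩
    choose R hR₀ hR using hR
    refine ⟨R, hR₀, fun p q hpq => ?_⟩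
    rcases hpq with hpq | hqp
    · exact hR p q hpq
    · exact (hR q p hqp).symm
  · rintro ⟨R, hR₀, hR⟩
    exact ⟨fun x hx => ⟨R x, hR₀ x, fun y hy => mt (hR x y (.inl hy)).2 hx⟩,
      fun x hx => ⟨R x, hR₀ x, fun y hy => (hR x y (.inl hy)).1 hx⟩⟩

end ContinuitySpace

theorem connected_iff_walks_general {V X : Type*} [ValueQuantale V] [Nonempty X]
    (d : X → X → V) :
    @ConnectedSpace X (genTop d) ↔
      ∀ a b : X, ∀ R : X → {v : V // WellAbove v ⊥},
        ∃ l : List X, l.head? = some a ∧ l.getLast? = some b ∧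
          l.Chain' fun p q => WellAbove (R p).1 (d p q) ∨ WellAbove (R q).1 (d q p) := by
  let := genTop d
  rw [connectedSpace_iff_clopen, and_iff_right ‹Nonempty X›]
  refine Iff.trans ?_ (forall₂_congr fun a b => forall_congr' fun R =>
    List.exists_isChain_head?_getLast?_iff_reflTransGen.symm)
  constructor
  · intro hclopen a b R
    have hreach : IsClopen {c | Relation.ReflTransGen (BallAdj d (fun x => (R x).1)) a c} :=
      isClopen_genTop_iff.2 ⟨_, fun x => (R x).2, fun p q hpq =>
        ⟨fun h => h.tail hpq, fun h => h.tail (ballAdj_comm.1 hpq)⟩⟩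
    rcases hclopen _ hreach with h | h
    · exact (Set.eq_empty_iff_forall_notMem.1 h a .refl).elim
    · exact Set.eq_univ_iff_forall.1 h b
  · intro hwalk U hU
    obtain ⟨R, hR₀, hR⟩ := isClopen_genTop_iff.1 hU
    refine U.eq_empty_or_nonempty.imp_right fun ⟨a, ha⟩ => Set.eq_univ_of_forall fun b => ?_
    exact (hwalk a b fun x => ⟨R x, hR₀ x⟩).mem_of_mem (fun p q hpq => (hR p q hpq).1) ha

/-- the topology generated by a continuity space `(V,X,d)` with `X`
nonempty is connected iff for all `a, b ∈ X` and every `R : X → V_≺` there is a walk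
`a = x₁, …, xₙ = b` with, at each step, either `d(xⱼ, xⱼ₊₁) ≺ R xⱼ` or
`d(xⱼ₊₁, xⱼ) ≺ R xⱼ₊₁`. -/
theorem connected_iff_walks {V X : Type*} [ValueQuantale V] [Nonempty X]
    (d : X → X → V) (hd : IsVSpaceOn (· + · : V → V → V) d) :
    @ConnectedSpace X (genTop d) ↔
      ∀ a b : X, ∀ R : X → {v : V // WellAbove v ⊥},
        ∃ l : List X, l.head? = some a ∧ l.getLast? = some b ∧
          l.Chain' fun p q => WellAbove (R p).1 (d p q) ∨ WellAbove (R q).1 (d q p) :=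
  connected_iff_walks_general d
end
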